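/- arXiv:1307.7304 — 2 statements merged into one kernel-verified Lean document; each statement's English description precedes it below -/
import Mathlib

section
/- A finite dimensional G-graded algebra A is graded Frobenius if and only if A_e is a Frobenius algebra and A is left e-faithful (i.e., for every g ∈ G and nonzero a_g ∈ A_g, A_{g⁻¹} a_g ≠ 0). -/
/-! A graded Frobenius isomorphism `φ : A ≅ A*` sends `A_e` to functionals vanishing off `A_e`,
so restricting them to `A_e` gives `A_e ≅ (A_e)*`; and for `0 ≠ a ∈ A_g` the functional `φ a ≠ 0`
lives on `A_{g⁻¹}`, where `φ a b = φ 1 (b a)`, so some `b ∈ A_{g⁻¹}` has `b a ≠ 0`.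

Conversely, extend the Frobenius form `λ = θ 1` of `A_e` by zero to `A`. Then `x ↦ λ (· * x)`
is balanced and graded, and it is injective: a nonzero component `x_g` has some `b ∈ A_{g⁻¹}`
with `0 ≠ b x_g ∈ A_e`, and nondegeneracy of `λ` on `A_e` gives `w` with `λ (w b x_g) ≠ 0`.
In both directions injectivity suffices, by dimension. -/

/-- The degree-`g` component of the dual of a graded module:
`(M*)_g = { f | f(M_h) = 0 for all h ≠ g⁻¹ }`. -/
def dualComponent {k M : Type*} [Field k] [AddCommGroup M] [Module k M]
    {G : Type*} [Group G] (ℳ : G → Submodule k M) (g : G) :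
    Submodule k (Module.Dual k M) where
  carrier := {f | ∀ h : G, h ≠ g⁻¹ → ∀ x ∈ ℳ h, f x = 0}
  zero_mem' := by intro h hh x hx; rfl
  add_mem' := by
    intro f₁ f₂ h₁ h₂ h hh x hx
    simp [h₁ h hh x hx, h₂ h hh x hx]
  smul_mem' := by
    intro c f hf h hh x hx
    simp [hf h hh x hx]

/-- `A` is `σ`-graded Frobenius: there is an isomorphism `A(σ) ≅ A*` of graded left
`A`-modules, where `A*` is a left `A`-module via `(a • f) y = f (y * a)`, graded by
`(A*)_g = { f | f(A_h) = 0 for h ≠ g⁻¹ }`, and `A(σ)_g = A_{gσ}`. -/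
def IsSigmaGradedFrobenius {k A : Type*} [Field k] [Ring A] [Algebra k A]
    {G : Type*} [Group G] (𝒜 : G → Submodule k A) (σ : G) : Prop :=
  ∃ φ : A ≃ₗ[k] Module.Dual k A,
    (∀ a x y : A, φ (a * x) y = φ x (y * a)) ∧
    ∀ g : G, ∀ x ∈ 𝒜 (g * σ), φ x ∈ dualComponent 𝒜 g

open DirectSum Module

section FrobeniusMap

variable {k A : Type*} [CommSemiring k] [Semiring A] [Algebra k A]

def frobeniusMap (t : Dual k A) : A →ₗ[k] Dual k A :=
  ((LinearMap.mul k A).compr₂ t).flip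

@[simp]
lemma frobeniusMap_apply (t : Dual k A) (x y : A) : frobeniusMap t x y = t (y * x) := rfl

lemma frobeniusMap_mul_apply (t : Dual k A) (a x y : A) :
    frobeniusMap t (a * x) y = frobeniusMap t x (y * a) := by
  simp [mul_assoc]

end FrobeniusMap

lemma LinearMap.bijective_of_injective_toDual {k V : Type*} [Field k] [AddCommGroup V]
    [Module k V] [FiniteDimensional k V] {f : V →ₗ[k] Dual k V} (hf : Function.Injective f) :
    Function.Bijective f :=
  ⟨hf, (injective_iff_surjective_of_finrank_eq_finrank Subspace.dual_finrank_eq.symm).mp hf⟩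

section GradedProj

variable {k M ι : Type*} [CommSemiring k] [AddCommMonoid M] [Module k M] [DecidableEq ι]

def gradedProj (ℳ : ι → Submodule k M) [Decomposition ℳ] (i : ι) : M →ₗ[k] ℳ i :=
  component k ι (fun i => ℳ i) i ∘ₗ (decomposeLinearEquiv ℳ).toLinearMap

lemma gradedProj_apply (ℳ : ι → Submodule k M) [Decomposition ℳ] (i : ι) (x : M) :
    gradedProj ℳ i x = decompose ℳ x i := rfl

end GradedProj

section DualComponent

variable {k M G : Type*} [Field k] [AddCommGroup M] [Module k M] [Group G]
  {ℳ : G → Submodule k M}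

lemma eq_zero_of_mem_dualComponent (hℳ : iSup ℳ = ⊤) {g : G} {f : Dual k M}
    (hf : f ∈ dualComponent ℳ g) (hvan : ∀ x ∈ ℳ g⁻¹, f x = 0) : f = 0 := by
  refine LinearMap.ker_eq_top.mp (top_le_iff.mp (hℳ ▸ iSup_le fun h x hx => ?_))
  by_cases hh : h = g⁻¹
  · exact hvan x (hh ▸ hx)
  · exact hf h hh x hx

lemma comp_gradedProj_one_mem_dualComponent [DecidableEq G] [Decomposition ℳ] (f : Dual k (ℳ 1)) :
    f ∘ₗ gradedProj ℳ 1 ∈ dualComponent ℳ 1 := by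
  intro h hh x hx
  rw [LinearMap.comp_apply, gradedProj_apply,
    ZeroMemClass.coe_eq_zero.mp (decompose_of_mem_ne ℳ hx (by simpa using hh)), map_zero]

end DualComponent

section GradedAlgebra

variable {k A G : Type*} [Field k] [Ring A] [Algebra k A] [Group G] {𝒜 : G → Submodule k A}

lemma injective_restrict_of_mem_dualComponent (h𝒜 : iSup 𝒜 = ⊤) {φ : A →ₗ[k] Dual k A}
    (hφ : Function.Injective φ) (hgr : ∀ x ∈ 𝒜 1, φ x ∈ dualComponent 𝒜 1) :
    Function.Injective ((𝒜 1).subtype.dualMap ∘ₗ φ ∘ₗ (𝒜 1).subtype) := by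
  rw [injective_iff_map_eq_zero]
  intro x hx
  refine Subtype.ext (hφ ?_)
  rw [ZeroMemClass.coe_zero, map_zero]
  refine eq_zero_of_mem_dualComponent h𝒜 (hgr x x.2) fun y hy => ?_
  simpa using DFunLike.congr_fun hx ⟨y, by simpa using hy⟩

lemma exists_mul_ne_zero_of_gradedFrobenius (h𝒜 : iSup 𝒜 = ⊤) {φ : A →ₗ[k] Dual k A}
    (hφ : Function.Injective φ) (hbal : ∀ a x y : A, φ (a * x) y = φ x (y * a))
    (hgr : ∀ g, ∀ x ∈ 𝒜 g, φ x ∈ dualComponent 𝒜 g) {g : G} {a : A} (ha : a ∈ 𝒜 g)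
    (ha0 : a ≠ 0) : ∃ b ∈ 𝒜 g⁻¹, b * a ≠ 0 := by
  by_contra! hann
  refine ha0 (hφ ?_)
  rw [map_zero]
  refine eq_zero_of_mem_dualComponent h𝒜 (hgr g a ha) fun b hb => ?_
  rw [← mul_one a, hbal, hann b hb, map_zero]

lemma frobeniusMap_mem_dualComponent
    (hmul : ∀ {g h : G}, ∀ a ∈ 𝒜 g, ∀ b ∈ 𝒜 h, a * b ∈ 𝒜 (g * h)) {t : Dual k A} (ht : t ∈ dualComponent 𝒜 1) {g : G}
    {x : A} (hx : x ∈ 𝒜 g) : frobeniusMap t x ∈ dualComponent 𝒜 g := fun h hh y hy =>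
  ht (h * g) (by simpa [mul_eq_one_iff_eq_inv] using hh) _ (hmul y hy x hx)

lemma apply_mul_eq_apply_mul_decompose [DecidableEq G] [Decomposition 𝒜]
    (hmul : ∀ {g h : G}, ∀ a ∈ 𝒜 g, ∀ b ∈ 𝒜 h, a * b ∈ 𝒜 (g * h)) {t : Dual k A}
    (ht : t ∈ dualComponent 𝒜 1) {g : G} {y : A} (hy : y ∈ 𝒜 g⁻¹) (x : A) :
    t (y * x) = t (y * decompose 𝒜 x g) := by
  classical
  conv_lhs => rw [← sum_support_decompose 𝒜 x]
  rw [Finset.mul_sum, map_sum, Finset.sum_eq_single g]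
  · intro h _ hhg
    exact ht _ (by simpa [inv_mul_eq_one, eq_comm] using hhg) _
      (hmul y hy _ (decompose 𝒜 x h).2)
  · intro hg
    rw [DFinsupp.notMem_support_iff.mp hg, ZeroMemClass.coe_zero, mul_zero, map_zero]

lemma exists_apply_mul_ne_zero_of_faithful
    (hmul : ∀ {g h : G}, ∀ a ∈ 𝒜 g, ∀ b ∈ 𝒜 h, a * b ∈ 𝒜 (g * h)) {t : Dual k A}
    (hnd : ∀ z ∈ 𝒜 1, z ≠ 0 → ∃ w ∈ 𝒜 1, t (w * z) ≠ 0)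
    (hfaith : ∀ g : G, ∀ a ∈ 𝒜 g, a ≠ 0 → ∃ b ∈ 𝒜 g⁻¹, b * a ≠ 0)
    {g : G} {a : A} (ha : a ∈ 𝒜 g) (ha0 : a ≠ 0) : ∃ y ∈ 𝒜 g⁻¹, t (y * a) ≠ 0 := by
  obtain ⟨b, hb, hba⟩ := hfaith g a ha ha0
  obtain ⟨w, hw, hwba⟩ := hnd _ (by simpa using hmul b hb a ha) hba
  exact ⟨w * b, by simpa using hmul w hw b hb, by rwa [mul_assoc]⟩

lemma frobeniusMap_injective [DecidableEq G] [Decomposition 𝒜]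
    (hmul : ∀ {g h : G}, ∀ a ∈ 𝒜 g, ∀ b ∈ 𝒜 h, a * b ∈ 𝒜 (g * h)) {t : Dual k A}
    (ht : t ∈ dualComponent 𝒜 1)
    (hnd : ∀ g : G, ∀ a ∈ 𝒜 g, a ≠ 0 → ∃ y ∈ 𝒜 g⁻¹, t (y * a) ≠ 0) :
    Function.Injective (frobeniusMap t) := by
  rw [injective_iff_map_eq_zero]
  intro x hx
  by_contra hx0
  obtain ⟨g, hg⟩ : ∃ g, (decompose 𝒜 x g : A) ≠ 0 := by
    by_contra! h
    exact hx0 ((decompose 𝒜).injective (DFinsupp.ext fun g => Subtype.ext (by simpa using h g)))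
  obtain ⟨y, hy, hyx⟩ := hnd g _ (decompose 𝒜 x g).2 hg
  rw [← apply_mul_eq_apply_mul_decompose hmul ht hy, ← frobeniusMap_apply, hx] at hyx
  exact hyx rfl

lemma exists_apply_mul_ne_zero_of_balanced [DecidableEq G] [Decomposition 𝒜]
    (hone : (1 : A) ∈ 𝒜 1) (hmul : ∀ {g h : G}, ∀ a ∈ 𝒜 g, ∀ b ∈ 𝒜 h, a * b ∈ 𝒜 (g * h))
    (θ : ↥(𝒜 1) ≃ₗ[k] Dual k ↥(𝒜 1))
    (hθ : ∀ a x y : ↥(𝒜 1),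
      θ ⟨(a : A) * (x : A), by simpa using hmul (a : A) a.2 (x : A) x.2⟩ y =
      θ x ⟨(y : A) * (a : A), by simpa using hmul (y : A) y.2 (a : A) a.2⟩)
    {z : A} (hz : z ∈ 𝒜 1) (hz0 : z ≠ 0) :
    ∃ w ∈ 𝒜 1, (θ ⟨1, hone⟩ ∘ₗ gradedProj 𝒜 1) (w * z) ≠ 0 := by
  obtain ⟨w, hw⟩ : ∃ w, θ ⟨z, hz⟩ w ≠ 0 := by
    by_contra! h
    exact hz0 (congrArg Subtype.val (θ.map_eq_zero_iff.mp (LinearMap.ext h)))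
  refine ⟨w, w.2, ?_⟩
  have hwz : w * z ∈ 𝒜 1 := by simpa using hmul w.1 w.2 z hz
  have hproj : decompose 𝒜 (w * z) 1 = ⟨w * z, hwz⟩ :=
    Subtype.ext (decompose_of_mem_same 𝒜 hwz)
  rw [LinearMap.comp_apply, gradedProj_apply, hproj]
  have hz1 : (⟨z * 1, by simpa using hmul z hz 1 hone⟩ : 𝒜 1) = ⟨z, hz⟩ := by simp
  have hbal := hθ ⟨z, hz⟩ ⟨1, hone⟩ w
  rw [hz1] at hbal
  exact hbal ▸ hw

end GradedAlgebra

/-- a finite dimensional `G`-graded algebra `A` is graded Frobenius iff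
`A_e` is a Frobenius algebra (`A_e ≅ (A_e)*` as left `A_e`-modules) and `A` is left
`e`-faithful: for every `g ∈ G` and nonzero `a_g ∈ A_g` one has `A_{g⁻¹} a_g ≠ 0`. -/
theorem gradedFrobenius_iff_identityComponent_and_faithful
    {k A : Type*} [Field k] [Ring A] [Algebra k A] [FiniteDimensional k A]
    {G : Type*} [Group G] [DecidableEq G]
    (𝒜 : G → Submodule k A)
    (hinternal : DirectSum.IsInternal 𝒜)
    (hone : (1 : A) ∈ 𝒜 1)
    (hmul : ∀ {g h : G}, ∀ a ∈ 𝒜 g, ∀ b ∈ 𝒜 h, a * b ∈ 𝒜 (g * h)) :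
    IsSigmaGradedFrobenius 𝒜 (1 : G) ↔
      ((∃ θ : ↥(𝒜 1) ≃ₗ[k] Module.Dual k ↥(𝒜 1),
        ∀ a x y : ↥(𝒜 1),
          θ ⟨(a : A) * (x : A), by simpa using hmul (a : A) a.2 (x : A) x.2⟩ y =
          θ x ⟨(y : A) * (a : A), by simpa using hmul (y : A) y.2 (a : A) a.2⟩) ∧
      (∀ g : G, ∀ a ∈ 𝒜 g, a ≠ 0 → ∃ b ∈ 𝒜 g⁻¹, b * a ≠ 0)) := by
  let _ : Decomposition 𝒜 := hinternal.chooseDecomposition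
  have htop := hinternal.submodule_iSup_eq_top
  constructor
  · rintro ⟨φ, hbal, hgr⟩
    simp only [mul_one] at hgr
    have hres := injective_restrict_of_mem_dualComponent htop φ.injective (hgr 1)
    exact ⟨⟨.ofBijective _ (LinearMap.bijective_of_injective_toDual hres),
      fun a x y => hbal a x y⟩,
      fun g a => exists_mul_ne_zero_of_gradedFrobenius htop φ.injective hbal hgr⟩
  · rintro ⟨⟨θ, hθ⟩, hfaith⟩
    set t := θ ⟨1, hone⟩ ∘ₗ gradedProj 𝒜 1
    have ht : t ∈ dualComponent 𝒜 1 := comp_gradedProj_one_mem_dualComponent _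
    have hinj : Function.Injective (frobeniusMap t) :=
      frobeniusMap_injective hmul ht fun g a ha ha0 => exists_apply_mul_ne_zero_of_faithful hmul
        (fun z hz hz0 => exists_apply_mul_ne_zero_of_balanced hone hmul θ hθ hz hz0) hfaith ha ha0
    exact ⟨.ofBijective _ (LinearMap.bijective_of_injective_toDual hinj),
      frobeniusMap_mul_apply t, fun g x hx => frobeniusMap_mem_dualComponent hmul ht (mul_one g ▸ hx)⟩
end

section
/- Every finite dimensional graded semisimple G-graded algebra is graded Frobenius. In particular, every finite dimensional G-graded division algebra is graded Frobenius. -/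
open DirectSum

section Decomposition

variable {ι M σ : Type*} [DecidableEq ι] [AddCommMonoid M] [SetLike σ M] [AddSubmonoidClass σ M]
  (ℳ : ι → σ) [Decomposition ℳ]

theorem coe_decompose_map_of_mapsTo (f : M →+ M) {s : ι → ι} (hs : Function.Injective s)
    (hf : ∀ i, ∀ x ∈ ℳ i, f x ∈ ℳ (s i)) (x : M) (i : ι) :
    (decompose ℳ (f x) (s i) : M) = f (decompose ℳ x i) := by
  induction x using Decomposition.inductionOn ℳ with
  | zero => simp
  | @homogeneous j m =>
    by_cases hji : j = i
    · subst hji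
      rw [decompose_of_mem_same ℳ (hf j m m.2), decompose_of_mem_same ℳ m.2]
    · rw [decompose_of_mem_ne ℳ (hf j m m.2) (hs.ne hji), decompose_of_mem_ne ℳ m.2 hji, map_zero]
  | add x y hx hy => simp [decompose_add, hx, hy]

theorem exists_coe_decompose_ne_zero {x : M} (hx : x ≠ 0) : ∃ i, (decompose ℳ x i : M) ≠ 0 := by
  by_contra! h
  exact hx ((decompose ℳ).injective (DFinsupp.ext fun i => Subtype.ext (by simpa using h i)))

theorem coe_decompose_mem_of_isHomogeneous {κ τ : Type*} [DecidableEq κ] [SetLike τ M]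
    [AddSubmonoidClass τ M] {𝒩 : κ → τ} [Decomposition 𝒩]
    (h𝒩 : ∀ j, SetLike.IsHomogeneous ℳ (𝒩 j)) {x : M} {i : ι} (hx : x ∈ ℳ i) (j : κ) :
    (decompose 𝒩 x j : M) ∈ ℳ i := by
  have h := coe_decompose_map_of_mapsTo 𝒩
    { toFun := fun y => (decompose ℳ y i : M), map_zero' := by simp, map_add' := by simp }
    Function.injective_id (fun j _ hy => h𝒩 j i hy) x j
  simp only [AddMonoidHom.coe_mk, ZeroHom.coe_mk, id, decompose_of_mem_same ℳ hx] at h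
  exact h ▸ (decompose ℳ _ i).2

end Decomposition

theorem Submodule.isHomogeneous_iff_eq_iSup_inf {R M ι : Type*} [Semiring R] [AddCommMonoid M]
    [Module R M] [DecidableEq ι] (ℳ : ι → Submodule R M) [Decomposition ℳ] (J : Submodule R M) :
    SetLike.IsHomogeneous ℳ J ↔ J = ⨆ i, J ⊓ ℳ i := by
  constructor
  · intro hJ
    refine le_antisymm (fun m hm => ?_) (iSup_le fun i => inf_le_left)
    classical
    rw [← sum_support_decompose ℳ m]
    exact Submodule.sum_mem _ fun i _ => Submodule.mem_iSup_of_mem i ⟨hJ i hm, (decompose ℳ m i).2⟩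
  · intro hJ i m hm
    rw [hJ] at hm
    induction hm using Submodule.iSup_induction' with
    | mem j m hm =>
      by_cases hji : j = i
      · subst hji; rw [decompose_of_mem_same ℳ hm.2]; exact hm.1
      · rw [decompose_of_mem_ne ℳ hm.2 hji]; exact zero_mem J
    | zero => simp
    | add x y _ _ hx hy => simpa [decompose_add] using add_mem hx hy

section Graded

variable {A G σ : Type*} [Semiring A] [SetLike σ A] [AddSubmonoidClass σ A]

theorem mul_coe_decompose_one {ι : Type*} [DecidableEq ι] (I : ι → σ) [Decomposition I]
    (hI : ∀ i, ∀ a : A, ∀ x ∈ I i, a * x ∈ I i) (z : A) (i : ι) :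
    z * decompose I 1 i = (decompose I z i : A) := by
  simpa using (coe_decompose_map_of_mapsTo I (AddMonoidHom.mulLeft z) Function.injective_id
    (fun i x hx => hI i z x hx) 1 i).symm

variable [DecidableEq G] {𝒜 : G → σ} [Decomposition 𝒜]

theorem coe_decompose_mul_mul_of_left_mem [Mul G] [IsLeftCancelMul G]
    (hmul : ∀ {g h : G}, ∀ a ∈ 𝒜 g, ∀ b ∈ 𝒜 h, a * b ∈ 𝒜 (g * h))
    {h : G} {y : A} (hy : y ∈ 𝒜 h) (x : A) (g : G) :
    (decompose 𝒜 (y * x) (h * g) : A) = y * decompose 𝒜 x g :=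
  coe_decompose_map_of_mapsTo 𝒜 (AddMonoidHom.mulLeft y) (mul_right_injective h)
    (fun _ x hx => hmul y hy x hx) x g

theorem coe_decompose_mul_mul_of_right_mem [Mul G] [IsRightCancelMul G]
    (hmul : ∀ {g h : G}, ∀ a ∈ 𝒜 g, ∀ b ∈ 𝒜 h, a * b ∈ 𝒜 (g * h))
    {g : G} {x : A} (hx : x ∈ 𝒜 g) (y : A) (h : G) :
    (decompose 𝒜 (y * x) (h * g) : A) = decompose 𝒜 y h * x :=
  coe_decompose_map_of_mapsTo 𝒜 (AddMonoidHom.mulRight x) (mul_left_injective g)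
    (fun _ y hy => hmul y hy x hx) y h

end Graded

theorem Module.exists_dual_imp_apply_ne_zero {K V : Type*} [Field K] [AddCommGroup V] [Module K V]
    (v : V) : ∃ f : Module.Dual K V, v ≠ 0 → f v ≠ 0 := by
  by_cases hv : v = 0
  · exact ⟨0, fun h => (h hv).elim⟩
  · exact (Module.Projective.exists_dual_ne_zero K hv).imp fun _ hf _ => hf

section Frobenius

variable {k A G : Type*} [Field k] [Ring A] [Algebra k A] [Group G] [DecidableEq G]
  {𝒜 : G → Submodule k A}

def IsMinimalGradedLeftIdeal (𝒜 : G → Submodule k A) (I : Submodule k A) : Prop :=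
  (∀ a : A, ∀ x ∈ I, a * x ∈ I) ∧ (I = ⨆ g : G, I ⊓ 𝒜 g) ∧ I ≠ ⊥ ∧
    ∀ J : Submodule k A, (∀ a : A, ∀ x ∈ J, a * x ∈ J) → (J = ⨆ g : G, J ⊓ 𝒜 g) → J < I → J = ⊥

variable [Decomposition 𝒜]

theorem IsMinimalGradedLeftIdeal.exists_mul_eq
    (hmul : ∀ {g h : G}, ∀ a ∈ 𝒜 g, ∀ b ∈ 𝒜 h, a * b ∈ 𝒜 (g * h))
    {I : Submodule k A} (hI : IsMinimalGradedLeftIdeal 𝒜 I) {g h : G} {x z : A}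
    (hxI : x ∈ I) (hx : x ∈ 𝒜 g) (hx0 : x ≠ 0) (hzI : z ∈ I) (hz : z ∈ 𝒜 h) :
    ∃ a ∈ 𝒜 (h * g⁻¹), a * x = z := by
  obtain ⟨hleft, -, -, hmin⟩ := hI
  set J := LinearMap.range (LinearMap.mulRight k x)
  have hJleft : ∀ a : A, ∀ y ∈ J, a * y ∈ J := by
    rintro a _ ⟨b, rfl⟩
    exact ⟨a * b, by simp [mul_assoc]⟩
  have hJhom : SetLike.IsHomogeneous 𝒜 J := by
    rintro i _ ⟨b, rfl⟩
    refine ⟨decompose 𝒜 b (i * g⁻¹), ?_⟩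
    rw [LinearMap.mulRight_apply, ← coe_decompose_mul_mul_of_right_mem hmul hx,
      inv_mul_cancel_right]
    rfl
  have hJI : J = I := by
    refine (le_iff_lt_or_eq.1 ?_).resolve_left fun hlt => hx0 ?_
    · rintro _ ⟨b, rfl⟩
      exact hleft b x hxI
    · have hJ0 := hmin J hJleft ((Submodule.isHomogeneous_iff_eq_iSup_inf 𝒜 J).1 hJhom) hlt
      exact (Submodule.mem_bot k).1 (hJ0 ▸ ⟨1, one_mul x⟩)
  obtain ⟨b, rfl⟩ : z ∈ J := hJI ▸ hzI
  refine ⟨decompose 𝒜 b (h * g⁻¹), (decompose 𝒜 b _).2, ?_⟩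
  rw [← coe_decompose_mul_mul_of_right_mem hmul hx, inv_mul_cancel_right]
  exact decompose_of_mem_same 𝒜 hz

theorem isSigmaGradedFrobenius_one_of_nondegenerate [FiniteDimensional k A]
    (hmul : ∀ {g h : G}, ∀ a ∈ 𝒜 g, ∀ b ∈ 𝒜 h, a * b ∈ 𝒜 (g * h)) (μ : Module.Dual k (𝒜 1))
    (hμ : ∀ g, ∀ x ∈ 𝒜 g, x ≠ 0 → ∃ y, μ (decompose 𝒜 (y * x) 1) ≠ 0) :
    IsSigmaGradedFrobenius 𝒜 1 := by
  let ε : Module.Dual k A :=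
    μ ∘ₗ component k G (fun g => 𝒜 g) 1 ∘ₗ (decomposeLinearEquiv 𝒜).toLinearMap
  let φ : A →ₗ[k] Module.Dual k A := (LinearMap.mul k A).flip.compr₂ ε
  have hφ (x y : A) : φ x y = μ (decompose 𝒜 (y * x) 1) := rfl
  have hinj : Function.Injective φ := by
    refine (injective_iff_map_eq_zero φ).2 fun x hx => ?_
    by_contra hx0
    obtain ⟨g, hg⟩ := exists_coe_decompose_ne_zero 𝒜 hx0
    obtain ⟨y, hy⟩ := hμ g _ (decompose 𝒜 x g).2 hg
    have hyx : (decompose 𝒜 (y * decompose 𝒜 x g) 1 : A) =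
        decompose 𝒜 (decompose 𝒜 y g⁻¹ * x) 1 := by
      have h1 := coe_decompose_mul_mul_of_right_mem hmul (decompose 𝒜 x g).2 y g⁻¹
      have h2 := coe_decompose_mul_mul_of_left_mem hmul (decompose 𝒜 y g⁻¹).2 x g
      rw [inv_mul_cancel] at h1 h2
      rw [h1, h2]
    rw [Subtype.ext hyx, ← hφ, hx, LinearMap.zero_apply] at hy
    exact hy rfl
  refine ⟨LinearMap.linearEquivOfInjective φ hinj Subspace.dual_finrank_eq.symm,
    fun a x y => ?_, fun g x hx h hh z hz => ?_⟩
  · simp only [LinearMap.linearEquivOfInjective_apply, hφ, mul_assoc]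
  · have hzx : z * x ∈ 𝒜 (h * (g * 1)) := hmul z hz x hx
    have hne : h * (g * 1) ≠ 1 := by
      rw [mul_one]
      exact fun e => hh (eq_inv_of_mul_eq_one_left e)
    change μ (decompose 𝒜 (z * x) 1) = 0
    rw [ZeroMemClass.coe_eq_zero.1 (decompose_of_mem_ne 𝒜 hzx hne), map_zero]

theorem isSigmaGradedFrobenius_one_of_isUnit [FiniteDimensional k A] (hone : (1 : A) ∈ 𝒜 1)
    (hmul : ∀ {g h : G}, ∀ a ∈ 𝒜 g, ∀ b ∈ 𝒜 h, a * b ∈ 𝒜 (g * h))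
    (hdiv : ∀ g : G, ∀ a ∈ 𝒜 g, a ≠ 0 → IsUnit a) :
    IsSigmaGradedFrobenius 𝒜 1 := by
  obtain ⟨μ, hμ⟩ := Module.exists_dual_imp_apply_ne_zero (K := k) (⟨1, hone⟩ : 𝒜 1)
  refine isSigmaGradedFrobenius_one_of_nondegenerate hmul μ fun g x hx hx0 => ?_
  obtain ⟨u, hu⟩ := (hdiv g x hx hx0).exists_left_inv
  have : Nontrivial A := nontrivial_of_ne x 0 hx0
  refine ⟨u, ?_⟩
  rw [hu, show decompose 𝒜 (1 : A) 1 = ⟨1, hone⟩ from Subtype.ext (decompose_of_mem_same 𝒜 hone)]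
  exact hμ (Subtype.coe_ne_coe.1 one_ne_zero)

theorem isSigmaGradedFrobenius_one_of_isInternal_isMinimalGradedLeftIdeal [FiniteDimensional k A]
    (hone : (1 : A) ∈ 𝒜 1) (hmul : ∀ {g h : G}, ∀ a ∈ 𝒜 g, ∀ b ∈ 𝒜 h, a * b ∈ 𝒜 (g * h))
    {ι : Type*} [DecidableEq ι] {I : ι → Submodule k A} (hI : IsInternal I)
    (hmin : ∀ i, IsMinimalGradedLeftIdeal 𝒜 (I i)) :
    IsSigmaGradedFrobenius 𝒜 1 := by
  classical
  let : Decomposition I := hI.chooseDecomposition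
  set e : ι → A := fun i => decompose I 1 i
  have mul_e (z : A) (i : ι) : z * e i = decompose I z i :=
    mul_coe_decompose_one I (fun i => (hmin i).1) z i
  have e_mem (i : ι) : e i ∈ 𝒜 1 := coe_decompose_mem_of_isHomogeneous 𝒜
    (fun j => (Submodule.isHomogeneous_iff_eq_iSup_inf 𝒜 (I j)).2 (hmin j).2.1) hone i
  have e_mul_self (i : ι) : e i * e i = e i := by
    rw [mul_e, decompose_of_mem_same I (decompose I 1 i).2]
  have e_mul_e {i j : ι} (hij : i ≠ j) : e i * e j = 0 := by
    rw [mul_e, decompose_of_mem_ne I (decompose I 1 i).2 hij]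
  choose τ hτ using fun l => Module.exists_dual_imp_apply_ne_zero (K := k) (e l)
  let μ : Module.Dual k (𝒜 1) := ∑ l ∈ (decompose I 1).support,
    τ l ∘ₗ LinearMap.mulLeftRight k (e l, e l) ∘ₗ (𝒜 1).subtype
  refine isSigmaGradedFrobenius_one_of_nondegenerate hmul μ fun g x hx hx0 => ?_
  obtain ⟨j, hj⟩ := exists_coe_decompose_ne_zero I hx0
  rw [← mul_e] at hj
  have hxe : x * e j ∈ 𝒜 g := by simpa using hmul x hx (e j) (e_mem j)
  obtain ⟨a, ha, hax⟩ := (hmin j).exists_mul_eq hmul (mul_e x j ▸ (decompose I x j).2) hxe hj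
    (decompose I 1 j).2 (e_mem j)
  have hdeg : e j * a * x ∈ 𝒜 1 := by simpa using hmul _ (hmul _ (e_mem j) a ha) x hx
  refine ⟨e j * a, ?_⟩
  rw [show decompose 𝒜 (e j * a * x) 1 = ⟨_, hdeg⟩ from
    Subtype.ext (decompose_of_mem_same 𝒜 hdeg)]
  simp only [μ, LinearMap.sum_apply, LinearMap.comp_apply,
    LinearMap.mulLeftRight_apply, Submodule.subtype_apply]
  have hej : e j ≠ 0 := fun h => hj (by rw [h, mul_zero])
  rw [Finset.sum_eq_single_of_mem j (DFinsupp.mem_support_iff.2 fun h => hej (by simp [e, h]))]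
  · simp only [mul_assoc]
    rw [show a * (x * e j) = e j from hax, e_mul_self, e_mul_self]
    exact hτ j hej
  · intro l _ hlj
    rw [← mul_assoc, ← mul_assoc, e_mul_e hlj, zero_mul, zero_mul, zero_mul, map_zero]

end Frobenius

/-- every finite dimensional graded semisimple `G`-graded algebra (a
direct sum of minimal graded left ideals) is graded Frobenius; in particular every
finite dimensional `G`-graded division algebra (every nonzero homogeneous element is
invertible) is graded Frobenius. -/
theorem gradedSemisimple_and_gradedDivision_gradedFrobenius
    {k A : Type*} [Field k] [Ring A] [Algebra k A] [FiniteDimensional k A]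
    {G : Type*} [Group G] [DecidableEq G]
    (𝒜 : G → Submodule k A)
    (hinternal : DirectSum.IsInternal 𝒜)
    (hone : (1 : A) ∈ 𝒜 1)
    (hmul : ∀ {g h : G}, ∀ a ∈ 𝒜 g, ∀ b ∈ 𝒜 h, a * b ∈ 𝒜 (g * h)) :
    ((∃ (ι : Type) (_ : DecidableEq ι) (I : ι → Submodule k A),
        DirectSum.IsInternal I ∧
        ∀ i : ι,
          (∀ a : A, ∀ x ∈ I i, a * x ∈ I i) ∧
          (I i = ⨆ g : G, I i ⊓ 𝒜 g) ∧
          I i ≠ ⊥ ∧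
          (∀ J : Submodule k A,
            (∀ a : A, ∀ x ∈ J, a * x ∈ J) →
            (J = ⨆ g : G, J ⊓ 𝒜 g) →
            J < I i → J = ⊥)) →
      IsSigmaGradedFrobenius 𝒜 (1 : G)) ∧
    ((∀ g : G, ∀ a ∈ 𝒜 g, a ≠ 0 → IsUnit a) →
      IsSigmaGradedFrobenius 𝒜 (1 : G)) := by
  let : Decomposition 𝒜 := hinternal.chooseDecomposition
  refine ⟨fun ⟨ι, _, I, hI, hmin⟩ => ?_, isSigmaGradedFrobenius_one_of_isUnit hone hmul⟩
  exact isSigmaGradedFrobenius_one_of_isInternal_isMinimalGradedLeftIdeal hone hmul hI hmin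
end
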